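/- A one-dimensional symmetric quantum walk U_QW(α,β,η) on ℂ²⊗ℓ²(ℤ), conjugated by the unitary relabeling I (with I|+1⊗k⟩=|2k⟩, I|−1⊗k⟩=|2k+1⟩), equals the BB matrix built from the scattering matrices S_{2j+1} = i[[0,1],[1,0]] and S_{2j} = −i e^{−iη_j}[[β_j, ᾱ_j],[α_j, −β̄_j]]. -/

import Mathlib

open Complex

noncomputable section

/-- `ℂ² ⊗ ℓ²(ℤ)`; the coin index is a `Bool` (`true` = +1, `false` = −1). -/
abbrev H2 := lp (fun _ : Bool × ℤ => ℂ) 2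
/-- `ℓ²(ℤ)`. -/
abbrev HZ := lp (fun _ : ℤ => ℂ) 2

def bv (τ : Bool) (j : ℤ) : H2 := lp.single 2 (τ, j) 1
def δZ (k : ℤ) : HZ := lp.single 2 k 1

/-- `De` built from an arbitrary family of 2×2 blocks `T_{2k}` acting on
`span{|2k⟩, |2k+1⟩}`. -/
def IsDeM (T : ℤ → Matrix (Fin 2) (Fin 2) ℂ) (De : HZ →L[ℂ] HZ) : Prop :=
  ∀ k : ℤ,
    De (δZ (2 * k)) = T (2 * k) 0 0 • δZ (2 * k) + T (2 * k) 1 0 • δZ (2 * k + 1) ∧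
    De (δZ (2 * k + 1)) = T (2 * k) 0 1 • δZ (2 * k) + T (2 * k) 1 1 • δZ (2 * k + 1)

/-- `Do` built from an arbitrary family of 2×2 blocks `T_{2k+1}` acting on
`span{|2k+1⟩, |2k+2⟩}`. -/
def IsDoM (T : ℤ → Matrix (Fin 2) (Fin 2) ℂ) (Do : HZ →L[ℂ] HZ) : Prop :=
  ∀ k : ℤ,
    Do (δZ (2 * k + 1)) =
      T (2 * k + 1) 0 0 • δZ (2 * k + 1) + T (2 * k + 1) 1 0 • δZ (2 * k + 2) ∧
    Do (δZ (2 * k + 2)) =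
      T (2 * k + 1) 0 1 • δZ (2 * k + 1) + T (2 * k + 1) 1 1 • δZ (2 * k + 2)

/-- The scattering matrices corresponding to a quantum walk with coins
`C(j) = e^{-iη_j} [[α_j, -β̄_j],[β_j, ᾱ_j]]`:
`S_{2j+1} = i [[0,1],[1,0]]` and `S_{2j} = -i e^{-iη_j} [[β_j, ᾱ_j],[α_j, -β̄_j]]`. -/
def Tqw (α β : ℤ → ℂ) (η : ℤ → ℝ) (m : ℤ) : Matrix (Fin 2) (Fin 2) ℂ :=
  if Even m then
    (-Complex.I * Complex.exp (-Complex.I * η (m / 2))) •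
      !![β (m / 2), starRingEnd ℂ (α (m / 2));
         α (m / 2), -(starRingEnd ℂ (β (m / 2)))]
  else Complex.I • !![0, 1; 1, 0]

/-! Both sides are continuous, so it suffices to compare them on the basis `δZ k`. The site
`δZ (2m)` is `I|+1⊗m⟩`, and the walk sends it to `e^{-iη_m}(α_m δZ (2m+2) + β_m δZ (2m-1))`;
on the BB side `De` applies the block `S_{2m}` to it and `Do` then moves `δZ (2m)` to
`δZ (2m-1)` and `δZ (2m+1)` to `δZ (2m+2)` with a factor `i`, which cancels the `-i` of `S_{2m}`.
The site `δZ (2m+1) = I|−1⊗m⟩` is handled the same way with the second column of the coin. -/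

theorem ext_δZ {F : Type*} [AddCommMonoid F] [Module ℂ F] [TopologicalSpace F] [T2Space F]
    {f g : HZ →L[ℂ] F} (h : ∀ k, f (δZ k) = g (δZ k)) : f = g :=
  lp.ext_continuousLinearMap ENNReal.ofNat_ne_top fun k => ContinuousLinearMap.ext_ring (h k)

section Tqw

variable (α β : ℤ → ℂ) (η : ℤ → ℝ) (k : ℤ)

theorem Tqw_two_mul :
    Tqw α β η (2 * k) =
      (-I * exp (-I * η k)) • !![β k, starRingEnd ℂ (α k); α k, -(starRingEnd ℂ (β k))] := by
  rw [Tqw, if_pos (even_two_mul k), Int.mul_ediv_cancel_left _ two_ne_zero]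

theorem Tqw_two_mul_add_one : Tqw α β η (2 * k + 1) = I • !![0, 1; 1, 0] :=
  if_neg (Int.not_even_two_mul_add_one k)

end Tqw

theorem IsDoM.apply_two_mul {T : ℤ → Matrix (Fin 2) (Fin 2) ℂ} {Do : HZ →L[ℂ] HZ}
    (h : IsDoM T Do) (m : ℤ) :
    Do (δZ (2 * m)) = T (2 * m - 1) 0 1 • δZ (2 * m - 1) + T (2 * m - 1) 1 1 • δZ (2 * m) := by
  have := (h (m - 1)).2
  rwa [show 2 * (m - 1) + 1 = 2 * m - 1 by ring, show 2 * (m - 1) + 2 = 2 * m by ring] at this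

section BB

variable {α β : ℤ → ℂ} {η : ℤ → ℝ} {De Do : HZ →L[ℂ] HZ}

theorem IsDoM.Tqw_apply_two_mul (hDo : IsDoM (Tqw α β η) Do) (m : ℤ) :
    Do (δZ (2 * m)) = I • δZ (2 * m - 1) := by
  rw [hDo.apply_two_mul, show 2 * m - 1 = 2 * (m - 1) + 1 by ring, Tqw_two_mul_add_one]
  simp

theorem IsDoM.Tqw_apply_two_mul_add_one (hDo : IsDoM (Tqw α β η) Do) (m : ℤ) :
    Do (δZ (2 * m + 1)) = I • δZ (2 * m + 2) := by
  rw [(hDo m).1, Tqw_two_mul_add_one]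
  simp

theorem bb_Tqw_apply_two_mul (hDe : IsDeM (Tqw α β η) De) (hDo : IsDoM (Tqw α β η) Do)
    (m : ℤ) :
    Do (De (δZ (2 * m))) =
      (exp (-I * η m) * α m) • δZ (2 * m + 2) + (exp (-I * η m) * β m) • δZ (2 * m - 1) := by
  rw [(hDe m).1, map_add, map_smul, map_smul, hDo.Tqw_apply_two_mul,
    hDo.Tqw_apply_two_mul_add_one, Tqw_two_mul, add_comm]
  simp only [Matrix.smul_apply, Matrix.of_apply, Matrix.cons_val', Matrix.cons_val_zero,
    Matrix.cons_val_one, Matrix.empty_val', Matrix.cons_val_fin_one, smul_smul, smul_eq_mul]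
  match_scalars
  · linear_combination -(exp (-I * η m) * α m) * I_mul_I
  · linear_combination -(exp (-I * η m) * β m) * I_mul_I

theorem bb_Tqw_apply_two_mul_add_one (hDe : IsDeM (Tqw α β η) De)
    (hDo : IsDoM (Tqw α β η) Do) (m : ℤ) :
    Do (De (δZ (2 * m + 1))) =
      (exp (-I * η m) * -(starRingEnd ℂ (β m))) • δZ (2 * m + 2) +
        (exp (-I * η m) * starRingEnd ℂ (α m)) • δZ (2 * m - 1) := by
  rw [(hDe m).2, map_add, map_smul, map_smul, hDo.Tqw_apply_two_mul,
    hDo.Tqw_apply_two_mul_add_one, Tqw_two_mul, add_comm]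
  simp only [Matrix.smul_apply, Matrix.of_apply, Matrix.cons_val', Matrix.cons_val_zero,
    Matrix.cons_val_one, Matrix.empty_val', Matrix.cons_val_fin_one, smul_smul, smul_eq_mul]
  match_scalars
  · linear_combination exp (-I * η m) * starRingEnd ℂ (β m) * I_mul_I
  · linear_combination -(exp (-I * η m) * starRingEnd ℂ (α m)) * I_mul_I

end BB

theorem relabel_shift_apply {S : H2 →L[ℂ] H2}
    (hS : ∀ (τ : Bool) (j : ℤ), S (bv τ j) = bv τ (j + if τ then 1 else -1))
    {Iop : H2 ≃ₗᵢ[ℂ] HZ}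
    (hI : ∀ k : ℤ, Iop (bv true k) = δZ (2 * k) ∧ Iop (bv false k) = δZ (2 * k + 1))
    (a b : ℂ) (m : ℤ) :
    Iop (S (a • bv true m + b • bv false m)) = a • δZ (2 * m + 2) + b • δZ (2 * m - 1) := by
  simp only [map_add, map_smul, hS, if_true, Bool.false_eq_true, if_false, (hI _).1, (hI _).2]
  congr 3 <;> ring

theorem qw_is_bb_general (α β : ℤ → ℂ) (η : ℤ → ℝ)
    (Cop : H2 →L[ℂ] H2)
    (hCop : ∀ j : ℤ,
      Cop (bv true j) =
        (Complex.exp (-Complex.I * η j) * α j) • bv true j +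
        (Complex.exp (-Complex.I * η j) * β j) • bv false j ∧
      Cop (bv false j) =
        (Complex.exp (-Complex.I * η j) * -(starRingEnd ℂ (β j))) • bv true j +
        (Complex.exp (-Complex.I * η j) * starRingEnd ℂ (α j)) • bv false j)
    (S : H2 →L[ℂ] H2)
    (hS : ∀ (τ : Bool) (j : ℤ), S (bv τ j) = bv τ (j + if τ then 1 else -1))
    (Iop : H2 ≃ₗᵢ[ℂ] HZ)
    (hI : ∀ k : ℤ, Iop (bv true k) = δZ (2 * k) ∧ Iop (bv false k) = δZ (2 * k + 1))
    (De Do : HZ →L[ℂ] HZ)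
    (hDe : IsDeM (Tqw α β η) De) (hDo : IsDoM (Tqw α β η) Do) :
    ∀ x : HZ, Iop (S (Cop (Iop.symm x))) = Do (De x) := by
  have key : (Iop.toContinuousLinearEquiv : H2 →L[ℂ] HZ) ∘L S ∘L Cop ∘L
      (Iop.symm.toContinuousLinearEquiv : HZ →L[ℂ] H2) = Do ∘L De := by
    refine ext_δZ fun k => ?_
    obtain ⟨m, rfl | rfl⟩ := k.even_or_odd'
    · show Iop (S (Cop (Iop.symm (δZ (2 * m))))) = Do (De (δZ (2 * m)))
      rw [Iop.symm_apply_eq.mpr (hI m).1.symm, (hCop m).1, relabel_shift_apply hS hI,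
        bb_Tqw_apply_two_mul hDe hDo]
    · show Iop (S (Cop (Iop.symm (δZ (2 * m + 1))))) = Do (De (δZ (2 * m + 1)))
      rw [Iop.symm_apply_eq.mpr (hI m).2.symm, (hCop m).2, relabel_shift_apply hS hI,
        bb_Tqw_apply_two_mul_add_one hDe hDo]
  exact fun x => congr($key x)

/-- A one-dimensional symmetric quantum walk, conjugated by the relabeling
`I|+1⊗k⟩=|2k⟩, I|−1⊗k⟩=|2k+1⟩`, is the BB matrix built from the scattering
matrices `S_{2j+1} = i[[0,1],[1,0]]`, `S_{2j} = -i e^{-iη_j}[[β_j,ᾱ_j],[α_j,-β̄_j]]`. -/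
theorem qw_is_bb (α β : ℤ → ℂ) (η : ℤ → ℝ)
    (hab : ∀ j, ‖α j‖ ^ 2 + ‖β j‖ ^ 2 = 1)
    (Cop : H2 →L[ℂ] H2)
    (hCop : ∀ j : ℤ,
      Cop (bv true j) =
        (Complex.exp (-Complex.I * η j) * α j) • bv true j +
        (Complex.exp (-Complex.I * η j) * β j) • bv false j ∧
      Cop (bv false j) =
        (Complex.exp (-Complex.I * η j) * -(starRingEnd ℂ (β j))) • bv true j +
        (Complex.exp (-Complex.I * η j) * starRingEnd ℂ (α j)) • bv false j)
    (S : H2 →L[ℂ] H2)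
    (hS : ∀ (τ : Bool) (j : ℤ), S (bv τ j) = bv τ (j + if τ then 1 else -1))
    (Iop : H2 ≃ₗᵢ[ℂ] HZ)
    (hI : ∀ k : ℤ, Iop (bv true k) = δZ (2 * k) ∧ Iop (bv false k) = δZ (2 * k + 1))
    (De Do : HZ →L[ℂ] HZ)
    (hDe : IsDeM (Tqw α β η) De) (hDo : IsDoM (Tqw α β η) Do) :
    ∀ x : HZ, Iop (S (Cop (Iop.symm x))) = Do (De x) :=
  qw_is_bb_general α β η Cop hCop S hS Iop hI De Do hDe hDo
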